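/- Let θ = (θ_g, X_g)_{g∈G} be a topological partial action of a topological group G on a compact Hausdorff space X, with enveloping space X_G = (G × X)/R, and let 2^θ be the induced partial action on the hyperspace 2^X, with enveloping space (2^X)_G = (G × 2^X)/2^R. Then the map Θ : X_G → (2^X)_G sending the class [g,x] to the class [g,{x}] is a well-defined topological embedding (a homeomorphism onto its image). -/

import Mathlib

/-- The hyperspace `2^X` of nonempty compact subsets of `X`. -/
structure NCompact (X : Type*) [TopologicalSpace X] where
  carrier : Set X
  isCompact' : IsCompact carrier
  nonempty' : carrier.Nonempty

/-- The Vietoris topology on the hyperspace `2^X`, generated by the subbasic open sets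
`{A | A ⊆ U}` and `{A | A ∩ U ≠ ∅}` for `U` open in `X`. -/
instance NCompact.instTopologicalSpace (X : Type*) [TopologicalSpace X] :
    TopologicalSpace (NCompact X) :=
  TopologicalSpace.generateFrom
    {S | ∃ U : Set X, IsOpen U ∧
      (S = {A : NCompact X | A.carrier ⊆ U} ∨ S = {A : NCompact X | (A.carrier ∩ U).Nonempty})}

/-- A topological partial action `θ = (θ_g, X_g)_{g ∈ G}` of a topological group `G` on a
topological space `X`: a family of open sets `dom g = X_g` and maps `map g = θ_g` which
restrict to homeomorphisms `θ_g : X_{g⁻¹} → X_g` (with inverse `θ_{g⁻¹}`), such that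
`X_1 = X`, `θ_1 = id`, `θ_g(X_{g⁻¹} ∩ X_h) = X_g ∩ X_{gh}` and `θ_g ∘ θ_h = θ_{gh}` on
`X_{h⁻¹} ∩ X_{(gh)⁻¹}`.  (The values of `map g` outside `dom g⁻¹` are irrelevant junk.) -/
structure TopPartialAction (G : Type*) (X : Type*) [Group G] [TopologicalSpace G]
    [TopologicalSpace X] where
  dom : G → Set X
  map : G → X → X
  isOpen_dom : ∀ g, IsOpen (dom g)
  dom_one : dom 1 = Set.univ
  map_one : ∀ x, map 1 x = x
  image_dom : ∀ g, map g '' dom g⁻¹ = dom g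
  map_inv : ∀ g, ∀ x ∈ dom g⁻¹, map g⁻¹ (map g x) = x
  image_inter : ∀ g h, map g '' (dom g⁻¹ ∩ dom h) = dom g ∩ dom (g * h)
  map_mul : ∀ g h, ∀ x ∈ dom h⁻¹ ∩ dom (g * h)⁻¹, map g (map h x) = map (g * h) x
  continuousOn_map : ∀ g, ContinuousOn (map g) (dom g⁻¹)

variable {G X : Type*} [Group G] [TopologicalSpace G] [TopologicalSpace X]

/-- The equivalence relation `R` on `G × X` defining the enveloping space `X_G = (G × X)/R`:
`(g,x) R (h,y)` iff `x ∈ X_{g⁻¹h}` and `θ_{h⁻¹g}(x) = y`. -/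
def envRel (θ : TopPartialAction G X) (p q : G × X) : Prop :=
  p.2 ∈ θ.dom (p.1⁻¹ * q.1) ∧ θ.map (q.1⁻¹ * p.1) p.2 = q.2

/-- The relation `2^R` on `G × 2^X` defining the enveloping space `(2^X)_G` of the induced
partial action `2^θ`: `(g,A) 2^R (h,B)` iff `A ⊆ X_{g⁻¹h}` and `θ_{h⁻¹g}(A) = B`. -/
def envRelH (θ : TopPartialAction G X) (p q : G × NCompact X) : Prop :=
  p.2.carrier ⊆ θ.dom (p.1⁻¹ * q.1) ∧ θ.map (q.1⁻¹ * p.1) '' p.2.carrier = q.2.carrier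

/-!
Send a class `[g, A]` of `(2^X)_G` to the set `{[g, a] | a ∈ A}` of points of `X_G`. This is
well defined (if `(g, A) 2^R (h, B)` then `(g, a) R (h, θ_{h⁻¹g} a)` for every `a ∈ A`), takes
`Θ [g, x]` to `{[g, x]}`, and is upper semicontinuous by the tube lemma: if all `[g, a]`, `a ∈ A`,
lie in an open set, so do all `[g', a']` with `g'` near `g` and `A'` inside a neighbourhood of `A`.
A continuous map with such a set-valued left inverse is an embedding.
-/

open Topology

theorem Topology.isEmbedding_of_setValued_leftInverse {α β : Type*} [TopologicalSpace α]
    [TopologicalSpace β] {f : α → β} (hf : Continuous f) (Φ : β → Set α)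
    (hΦf : ∀ a, Φ (f a) = {a}) (hΦ : ∀ U, IsOpen U → IsOpen {b | Φ b ⊆ U}) :
    IsEmbedding f := by
  refine ⟨⟨le_antisymm hf.le_induced fun U hU => isOpen_induced_iff.mpr ?_⟩, ?_⟩
  · exact ⟨{b | Φ b ⊆ U}, hΦ U hU, by ext a; simp [hΦf]⟩
  · intro a b hab
    simpa [hΦf] using congrArg Φ hab

namespace NCompact

def singleton (x : X) : NCompact X := ⟨{x}, isCompact_singleton, Set.singleton_nonempty x⟩

omit [Group G] [TopologicalSpace G] in
theorem isOpen_setOf_carrier_subset {U : Set X} (hU : IsOpen U) :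
    IsOpen {A : NCompact X | A.carrier ⊆ U} :=
  TopologicalSpace.isOpen_generateFrom_of_mem ⟨U, hU, Or.inl rfl⟩

omit [Group G] [TopologicalSpace G] in
theorem continuous_singleton : Continuous (singleton : X → NCompact X) := by
  refine continuous_generateFrom_iff.mpr ?_
  rintro s ⟨U, hU, rfl | rfl⟩ <;> simpa [singleton] using hU

omit [Group G] [TopologicalSpace G] in
theorem isOpen_setOf_forall_mem_carrier {Y : Type*} [TopologicalSpace Y] {W : Set (Y × X)}
    (hW : IsOpen W) : IsOpen {p : Y × NCompact X | ∀ x ∈ p.2.carrier, (p.1, x) ∈ W} := by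
  refine isOpen_iff_forall_mem_open.mpr fun ⟨y, A⟩ hyA => ?_
  have hsub : ({y} : Set Y) ×ˢ A.carrier ⊆ W := by
    rintro ⟨y', x⟩ ⟨rfl, hx⟩
    exact hyA x hx
  obtain ⟨u, v, hu, hv, hyu, hAv, huv⟩ :=
    generalized_tube_lemma isCompact_singleton A.isCompact' hW hsub
  refine ⟨u ×ˢ {B : NCompact X | B.carrier ⊆ v}, ?_, hu.prod (isOpen_setOf_carrier_subset hv),
    hyu rfl, hAv⟩
  rintro ⟨y', B⟩ ⟨hy', hB⟩ x hx
  exact huv ⟨hy', hB hx⟩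

end NCompact

section Enveloping

variable (θ : TopPartialAction G X)

theorem envRelH_singleton_of_envRel {p q : G × X} (h : envRel θ p q) :
    envRelH θ (p.1, NCompact.singleton p.2) (q.1, NCompact.singleton q.2) :=
  ⟨Set.singleton_subset_iff.mpr h.1, by simp [NCompact.singleton, h.2]⟩

def envSingleton : Quot (envRel θ) → Quot (envRelH θ) :=
  Quot.lift (fun p => Quot.mk _ (p.1, NCompact.singleton p.2))
    fun _ _ h => Quot.sound (envRelH_singleton_of_envRel θ h)

theorem continuous_envSingleton : Continuous (envSingleton θ) :=
  continuous_quot_lift _ <| continuous_quot_mk.comp <|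
    continuous_fst.prodMk (NCompact.continuous_singleton.comp continuous_snd)

def envPoints : Quot (envRelH θ) → Set (Quot (envRel θ)) :=
  Quot.lift (fun p => (fun x => Quot.mk _ (p.1, x)) '' p.2.carrier) fun p q ⟨hdom, himg⟩ => by
    rw [← himg, Set.image_image]
    exact Set.image_congr fun x hx => Quot.sound ⟨hdom hx, rfl⟩

theorem envPoints_envSingleton (c : Quot (envRel θ)) :
    envPoints θ (envSingleton θ c) = {c} := by
  induction c using Quot.ind
  simp [envPoints, envSingleton, NCompact.singleton]

theorem isOpen_setOf_envPoints_subset {U : Set (Quot (envRel θ))} (hU : IsOpen U) :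
    IsOpen {c | envPoints θ c ⊆ U} := by
  refine isQuotientMap_quot_mk.isOpen_preimage.mp ?_
  simpa [envPoints, Set.image_subset_iff, Set.subset_def] using
    NCompact.isOpen_setOf_forall_mem_carrier (continuous_quot_mk.isOpen_preimage U hU)

end Enveloping

theorem embedding_envelopingSpace_hyperspace_general
    {G X : Type*} [Group G] [TopologicalSpace G]
    [TopologicalSpace X]
    (θ : TopPartialAction G X) :
    ∃ Θ : Quot (envRel θ) → Quot (envRelH θ),
      (∀ (g : G) (x : X),
        Θ (Quot.mk (envRel θ) (g, x)) =
          Quot.mk (envRelH θ)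
            (g, ⟨{x}, isCompact_singleton, Set.singleton_nonempty x⟩)) ∧
      Topology.IsEmbedding Θ :=
  ⟨envSingleton θ, fun _ _ => rfl,
    isEmbedding_of_setValued_leftInverse (continuous_envSingleton θ) (envPoints θ)
      (envPoints_envSingleton θ) fun _ => isOpen_setOf_envPoints_subset θ⟩

/-- Let `θ` be a topological partial action of a topological group `G` on a compact Hausdorff
space `X`, with enveloping space `X_G = (G × X)/R`, and let `2^θ` be the induced partial
action on the hyperspace `2^X`, with enveloping space `(2^X)_G = (G × 2^X)/2^R` (both with
the quotient topology).  Then the map `Θ : X_G → (2^X)_G`, `[g,x] ↦ [g,{x}]`, is a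
well-defined topological embedding. -/
theorem embedding_envelopingSpace_hyperspace
    {G X : Type*} [Group G] [TopologicalSpace G] [IsTopologicalGroup G]
    [TopologicalSpace X] [CompactSpace X] [T2Space X]
    (θ : TopPartialAction G X) :
    ∃ Θ : Quot (envRel θ) → Quot (envRelH θ),
      (∀ (g : G) (x : X),
        Θ (Quot.mk (envRel θ) (g, x)) =
          Quot.mk (envRelH θ)
            (g, ⟨{x}, isCompact_singleton, Set.singleton_nonempty x⟩)) ∧
      Topology.IsEmbedding Θ :=
  embedding_envelopingSpace_hyperspace_general θ
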